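/- Parameterization gap upper bound (abstract form): let P* = min_{φ∈F} {F₀(φ) : Fᵢ(φ) ≤ cᵢ ∀i} with Lagrangian L(φ,λ), and suppose: (a) for every φ ∈ F there exists θ ∈ H such that max_{i} |Fᵢ(f(θ,·)) − Fᵢ(φ)| ≤ Lε; (b) strong duality holds both for the original problem and for the perturbed problem min {F₀(φ) + Lε : Fᵢ(φ) ≤ cᵢ − Lε}, with the latter attained by dual variable λ_p*. Then the parameterized dual value D*_ε = max_{λ≥0} min_{θ∈H} L(f(θ,·),λ) satisfies P* ≤ D*_ε ≤ P* + (1 + ‖λ_p*‖₁)·Lε. -/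
import Mathlib


/-- Parameterization gap (abstract form): under an Lε-approximation property of
the parameterization and strong duality for the original and tightened
problems, the parameterized dual value D*_ε = sup_{λ≥0} inf_θ L(f θ, λ)
satisfies P* ≤ D*_ε ≤ P* + (1 + ‖λ_p*‖₁)·Lε.  The first conjunct exhibits a
multiplier at which the inner infimum is at least P*; the second shows that for
every λ ≥ 0 the inner infimum is at most P* + (1 + ‖λ_p*‖₁)·Lε. -/
theorem stmt_6 {Φ Θ : Type*} {m : ℕ}
    (F0 : Φ → ℝ) (F : Fin m → Φ → ℝ) (c : Fin m → ℝ) (f : Θ → Φ)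
    (L ε : ℝ) (hL : 0 < L) (hε : 0 < ε)
    (happrox : ∀ φ : Φ, ∃ θ : Θ, |F0 (f θ) - F0 φ| ≤ L * ε ∧
        ∀ i, |F i (f θ) - F i φ| ≤ L * ε)
    (Pstar : ℝ) (φstar : Φ) (lstar : Fin m → ℝ) (hlstar : ∀ i, 0 ≤ lstar i)
    (hfeas : ∀ i, F i φstar ≤ c i) (hPval : Pstar = F0 φstar)
    (hopt : ∀ φ : Φ, (∀ i, F i φ ≤ c i) → Pstar ≤ F0 φ)
    (hdual : ∀ φ : Φ, Pstar ≤ F0 φ + ∑ i, lstar i * (F i φ - c i))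
    (Pp : ℝ) (φp : Φ) (lp : Fin m → ℝ) (hlp : ∀ i, 0 ≤ lp i)
    (hfeasp : ∀ i, F i φp ≤ c i - L * ε) (hPpval : Pp = F0 φp + L * ε)
    (hoptp : ∀ φ : Φ, (∀ i, F i φ ≤ c i - L * ε) → Pp ≤ F0 φ + L * ε)
    (hdualp : ∀ φ : Φ,
      Pp ≤ (F0 φ + L * ε) + ∑ i, lp i * (F i φ - (c i - L * ε))) :
    (∃ l : Fin m → ℝ, (∀ i, 0 ≤ l i) ∧
        ∀ θ : Θ, Pstar ≤ F0 (f θ) + ∑ i, l i * (F i (f θ) - c i)) ∧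
    (∀ l : Fin m → ℝ, (∀ i, 0 ≤ l i) →
        ∃ θ : Θ, F0 (f θ) + ∑ i, l i * (F i (f θ) - c i)
          ≤ Pstar + (1 + ∑ i, lp i) * (L * ε)) := by
  constructor
  · exact ⟨lstar, hlstar, fun θ => hdual (f θ)⟩
  · intro l hl
    obtain ⟨θ, h0, hi⟩ := happrox φp
    refine ⟨θ, ?_⟩
    have hF0 : F0 (f θ) ≤ F0 φp + L * ε := by
      have := abs_le.mp h0; linarith [this.2]
    have hsum : ∑ i, l i * (F i (f θ) - c i) ≤ 0 := by
      apply Finset.sum_nonpos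
      intro i _
      have h1 := (abs_le.mp (hi i)).2
      have h2 := hfeasp i
      have h3 : F i (f θ) - c i ≤ 0 := by linarith
      exact mul_nonpos_of_nonneg_of_nonpos (hl i) h3
    have hPp : Pp ≤ Pstar + (1 + ∑ i, lp i) * (L * ε) := by
      have h := hdualp φstar
      have hsum2 : ∑ i, lp i * (F i φstar - (c i - L * ε))
          ≤ ∑ i, lp i * (L * ε) := by
        apply Finset.sum_le_sum
        intro i _
        apply mul_le_mul_of_nonneg_left _ (hlp i)
        have := hfeas i; linarith
      rw [← Finset.sum_mul] at hsum2
      rw [hPval]; nlinarith [hsum2, h]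
    linarith
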